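/- Let m, n be coprime positive integers, D an (m,n)-Dyck path, and D̄ its rank complement. Then α(D̄) is the conjugate partition of α(D), where α is Anderson's bijection from (m,n)-Dyck paths to (m,n)-cores. -/

import Mathlib

/-!
Let `S(D)` be the set of ranks of the south ends of `D`. Coprimality makes `S(D)` a system of
representatives modulo `n`, and a positive `h` lies in `α(D)` exactly when `h < s` for the
`s ∈ S(D)` congruent to `h`. A rank `r` is a south rank iff `r` and `r + m` are both ranks, so if
`M` is the maximal rank then `S(D̄) = M - m - S(D)`. With `N = M - m - n`, the largest element of
`α(D)`, this gives `h ∈ α(D̄) ↔ h ≤ N ∧ N - h ∉ α(D)`.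

The first-column hooks of a partition `λ` with largest hook `N` obey the same rule with respect
to those of `λ'`: `H(λ)` and `N - H(λ')` are disjoint subsets of `[0, N]` (a common value would
give a cell of hook length `0`) whose sizes add up to `N + 1`. A partition is determined by its
first-column hooks.
-/

open Nat

/-- Number of north steps among the first `i` steps of the path `P`
(`true` = north step `N`, `false` = east step `E`). -/
def nSteps (P : List Bool) (i : ℕ) : ℕ := (P.take i).count true

/-- Number of east steps among the first `i` steps. -/
def eSteps (P : List Bool) (i : ℕ) : ℕ := (P.take i).count false

/-- Rank `m*b - n*a` of the `i`-th lattice point `(a,b)` of the path. -/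
def rank (m n : ℕ) (P : List Bool) (i : ℕ) : ℤ :=
  (m : ℤ) * nSteps P i - (n : ℤ) * eSteps P i

/-- A lattice path from `(0,0)` to `(m,n)`: `m+n` unit steps, `n` of them north. -/
def IsPath (m n : ℕ) (P : List Bool) : Prop :=
  P.length = m + n ∧ P.count true = n

/-- An `(m,n)`-Dyck path: a path staying weakly above the diagonal,
equivalently with all ranks nonnegative. -/
def IsDyck (m n : ℕ) (P : List Bool) : Prop :=
  IsPath m n P ∧ ∀ i ≤ m + n, 0 ≤ rank m n P i

/-- The set of ranks of the first `m+n` lattice points of the path. -/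
def rankSet (m n : ℕ) (P : List Bool) : Finset ℤ :=
  (Finset.range (m + n)).image (rank m n P)

/-- Ranks of south ends (starting points of north steps). -/
def southRanks (m n : ℕ) (P : List Bool) : Finset ℤ :=
  ((Finset.range (m + n)).filter (fun i => P.getD i false = true)).image (rank m n P)

/-- Ranks of west ends (starting points of east steps). -/
def westRanks (m n : ℕ) (P : List Bool) : Finset ℤ :=
  ((Finset.range (m + n)).filter (fun i => P.getD i true = false)).image (rank m n P)

/-- Transpose of a path: reverse the word and exchange `N` and `E`. -/
def transpose (P : List Bool) : List Bool := (P.map (fun b => !b)).reverse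

/-- `D'` is the rank complement of `D`: its rank set is `M - r(D)`
where `M` is the maximum rank of `D`. -/
def IsRankComplement (m n : ℕ) (D D' : List Bool) : Prop :=
  ∃ M : ℤ, IsGreatest (↑(rankSet m n D) : Set ℤ) M ∧
    rankSet m n D' = (rankSet m n D).image (fun r => M - r)

/-- A partition, encoded as a weakly decreasing list of positive integers. -/
def IsPartition (L : List ℕ) : Prop :=
  L.Pairwise (· ≥ ·) ∧ ∀ x ∈ L, 0 < x

/-- Hook length of the cell in (0-based) row `i`, column `j`. -/
def hook (L : List ℕ) (i j : ℕ) : ℕ :=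
  L.getD i 0 - j + (L.drop (i + 1)).countP (fun x => decide (j < x))

/-- `L` is an `n`-core: no hook length is divisible by `n`. -/
def IsCore (n : ℕ) (L : List ℕ) : Prop :=
  ∀ i < L.length, ∀ j < L.getD i 0, ¬ (n ∣ hook L i j)

/-- The set of first-column hook lengths of `L`. -/
def firstColHooks (L : List ℕ) : Finset ℕ :=
  (Finset.range L.length).image (fun i => hook L i 0)

/-- Conjugate (transpose) partition. -/
def conjugate (L : List ℕ) : List ℕ :=
  (List.range (L.getD 0 0)).map (fun j => L.countP (fun x => decide (j < x)))

/-- `H` is `n`-flush: no element is a multiple of `n`, and it is closed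
under subtracting `n` while staying positive. -/
def IsFlush (n : ℕ) (H : Finset ℕ) : Prop :=
  (∀ h ∈ H, ¬ (n ∣ h)) ∧ ∀ h ∈ H, n < h → h - n ∈ H

/-- `s_i^n(H)`: the maximum of `((n+H) ∪ {i}) ∩ (i + nℤ)`. -/
def sFun (n : ℕ) (H : Finset ℕ) (i : ℕ) : ℕ :=
  (insert i ((H.filter (fun h => h % n = i % n)).image (fun h => h + n))).max'
    (Finset.insert_nonempty _ _)

/-- `S^n(H) = {s_0, ..., s_{n-1}}`. -/
def sSet (n : ℕ) (H : Finset ℕ) : Finset ℕ := (Finset.range n).image (sFun n H)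

/-- The lattice point `(a,b)` lies strictly to the right of the path `D`
inside the `m × n` rectangle: every lattice point of `D` at height `b`
has `x`-coordinate less than `a`. -/
def StrictlyRightOf (m n : ℕ) (D : List Bool) (a b : ℕ) : Prop :=
  a ≤ m ∧ b ≤ n ∧ ∀ i ≤ m + n, (D.take i).count true = b → (D.take i).count false < a

/-- The positive ranks of lattice points lying strictly to the right of `D`. -/
def andersonSet (m n : ℕ) (D : List Bool) : Set ℕ :=
  {h | 0 < h ∧ ∃ a b : ℕ, StrictlyRightOf m n D a b ∧ (h : ℤ) = (m : ℤ) * b - (n : ℤ) * a}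

/-- The `x`-coordinate of the vertical step of `D` at height `y`
(the number of east steps taken at heights `≤ y`). -/
def southX (D : List Bool) (y : ℕ) : ℕ :=
  (List.range D.length).countP
    (fun i => decide (D.getD i true = false ∧ (D.take i).count true ≤ y))

/-- The partition formed by the cells above the path `D`
inside a rectangle of height `n`. -/
def pathPartition (n : ℕ) (D : List Bool) : List ℕ :=
  (((List.range n).reverse).map (fun y => southX D y)).filter (fun x => decide (0 < x))

/-- Arm of the cell `(i,j)` of `L`. -/
def armL (L : List ℕ) (i j : ℕ) : ℕ := L.getD i 0 - (j + 1)

/-- Leg of the cell `(i,j)` of `L`. -/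
def legL (L : List ℕ) (i j : ℕ) : ℕ := (L.drop (i + 1)).countP (fun x => decide (j < x))

/-- The dinv statistic of an `(m,n)`-Dyck path: the number of cells `c` of the
partition above the path with `arm(c)/(leg(c)+1) ≤ m/n < (arm(c)+1)/leg(c)`. -/
def dinv (m n : ℕ) (D : List Bool) : ℕ :=
  ((Finset.range (pathPartition n D).length ×ˢ Finset.range m).filter
    (fun p => p.2 < (pathPartition n D).getD p.1 0 ∧
      armL (pathPartition n D) p.1 p.2 * n ≤ m * (legL (pathPartition n D) p.1 p.2 + 1) ∧
      m * legL (pathPartition n D) p.1 p.2 < n * (armL (pathPartition n D) p.1 p.2 + 1))).card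

/-- `codinv(D) = #{(r_s, r_w) : r_s ∈ S(D), r_w ∈ W(D), r_s < r_w}`. -/
def codinv (m n : ℕ) (D : List Bool) : ℕ :=
  ((southRanks m n D ×ˢ westRanks m n D).filter (fun p => p.1 < p.2)).card

/-- The skew length of an `(m,n)`-core: the number of cells lying both in an
`n`-row (a row `i` with `h_i + n ∈ S^n(H_λ)`) and in the `m`-boundary
(hook length `< m`). -/
def skewLength (m n : ℕ) (L : List ℕ) : ℕ :=
  ((Finset.range L.length ×ˢ Finset.range (L.headD 0)).filter
    (fun p => p.2 < L.getD p.1 0 ∧ hook L p.1 p.2 < m ∧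
      hook L p.1 0 + n ∈ sSet n (firstColHooks L))).card

section LatticePath

variable {m n : ℕ} {P : List Bool} {i j : ℕ}

lemma nSteps_add_eSteps (hP : IsPath m n P) (hi : i ≤ m + n) : nSteps P i + eSteps P i = i := by
  rw [nSteps, eSteps, List.count_true_add_count_false, List.length_take, hP.1, min_eq_left hi]

lemma steps_succ_of_north (hi : i < P.length) (h : P.getD i false = true) :
    nSteps P (i + 1) = nSteps P i + 1 ∧ eSteps P (i + 1) = eSteps P i := by
  rw [List.getD_eq_getElem _ _ hi] at h
  simp [nSteps, eSteps, List.take_add_one, List.getElem?_eq_getElem hi, h]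

lemma steps_succ_of_east (hi : i < P.length) (h : P.getD i false = false) :
    nSteps P (i + 1) = nSteps P i ∧ eSteps P (i + 1) = eSteps P i + 1 := by
  rw [List.getD_eq_getElem _ _ hi] at h
  simp [nSteps, eSteps, List.take_add_one, List.getElem?_eq_getElem hi, h]

lemma nSteps_succ_le (i : ℕ) : nSteps P (i + 1) ≤ nSteps P i + 1 := by
  simp only [nSteps, List.take_add_one, List.count_append]
  gcongr
  exact List.count_le_length.trans (by cases P[i]? <;> simp)

lemma nSteps_mono (hij : i ≤ j) : nSteps P i ≤ nSteps P j :=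
  ((List.take_prefix_take_left hij).sublist).count_le _

lemma eSteps_mono (hij : i ≤ j) : eSteps P i ≤ eSteps P j :=
  ((List.take_prefix_take_left hij).sublist).count_le _

lemma nSteps_le (hP : IsPath m n P) (i : ℕ) : nSteps P i ≤ n :=
  hP.2 ▸ (List.take_sublist _ _).count_le _

lemma nSteps_full (hP : IsPath m n P) : nSteps P (m + n) = n := by
  rw [nSteps, List.take_of_length_le hP.1.le, hP.2]

lemma eSteps_full (hP : IsPath m n P) : eSteps P (m + n) = m := by
  have := nSteps_add_eSteps hP le_rfl
  rw [nSteps_full hP] at this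
  omega

lemma rank_zero : rank m n P 0 = 0 := by simp [rank, nSteps, eSteps]

lemma rank_full (hP : IsPath m n P) : rank m n P (m + n) = 0 := by
  rw [rank, nSteps_full hP, eSteps_full hP]; ring

lemma rank_succ_of_north (hi : i < P.length) (h : P.getD i false = true) :
    rank m n P (i + 1) = rank m n P i + m := by
  obtain ⟨hN, hE⟩ := steps_succ_of_north hi h
  rw [rank, rank, hN, hE]; push_cast; ring

lemma rank_succ_of_east (hi : i < P.length) (h : P.getD i false = false) :
    rank m n P (i + 1) = rank m n P i - n := by
  obtain ⟨hN, hE⟩ := steps_succ_of_east hi h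
  rw [rank, rank, hN, hE]; push_cast; ring

lemma le_of_nSteps_eq_of_north (hi : i < P.length) (h : P.getD i false = true)
    (hj : nSteps P j = nSteps P i) : j ≤ i := by
  by_contra! hij
  have := nSteps_mono (P := P) (Nat.succ_le_of_lt hij)
  rw [(steps_succ_of_north hi h).1] at this
  omega

end LatticePath

section SouthRanks

variable {m n : ℕ} {D : List Bool} {r : ℤ}

lemma mem_rankSet_iff : r ∈ rankSet m n D ↔ ∃ i < m + n, rank m n D i = r := by
  simp [rankSet]

lemma mem_southRanks_iff :
    r ∈ southRanks m n D ↔ ∃ i < m + n, D.getD i false = true ∧ rank m n D i = r := by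
  simp [southRanks, and_assoc]

lemma nonneg_of_mem_rankSet (hD : IsDyck m n D) (hr : r ∈ rankSet m n D) : 0 ≤ r := by
  obtain ⟨i, hi, rfl⟩ := mem_rankSet_iff.1 hr
  exact hD.2 i hi.le

lemma nSteps_lt_of_north (hP : IsPath m n D) {i : ℕ} (hi : i < D.length)
    (h : D.getD i false = true) : nSteps D i < n := by
  have := nSteps_le hP (i + 1)
  rw [(steps_succ_of_north hi h).1] at this
  omega

lemma getD_zero_of_isDyck (hm : 0 < m) (hn : 0 < n) (hD : IsDyck m n D) :
    D.getD 0 false = true := by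
  have hlen : 0 < D.length := by rw [hD.1.1]; omega
  by_contra hE
  have h1 := rank_succ_of_east (m := m) (n := n) hlen (by simpa using hE)
  rw [zero_add, rank_zero] at h1
  have := hD.2 1 (by omega)
  omega

lemma rank_one (hm : 0 < m) (hn : 0 < n) (hD : IsDyck m n D) : rank m n D 1 = m := by
  have hlen : 0 < D.length := by rw [hD.1.1]; omega
  rw [← zero_add 1, rank_succ_of_north hlen (getD_zero_of_isDyck hm hn hD), rank_zero, zero_add]

lemma zero_mem_southRanks (hm : 0 < m) (hn : 0 < n) (hD : IsDyck m n D) :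
    0 ∈ southRanks m n D :=
  mem_southRanks_iff.2 ⟨0, by omega, getD_zero_of_isDyck hm hn hD, rank_zero⟩

lemma Int.exists_eq_mul_of_mul_eq_mul (hco : m.Coprime n) (hn : 0 < n) {A B : ℤ}
    (h : m * B = n * A) : ∃ k, B = n * k ∧ A = m * k := by
  have hcop : IsCoprime (n : ℤ) m := Nat.isCoprime_iff_coprime.2 hco.symm
  obtain ⟨k, rfl⟩ := hcop.dvd_of_dvd_mul_left ⟨A, h⟩
  refine ⟨k, rfl, mul_left_cancel₀ (by positivity : (n : ℤ) ≠ 0) ?_⟩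
  rw [← h]; ring

/-- Two points of ranks `r` and `r + m` differ by `(0, 1)` modulo `(m, n)`, so their indices
differ by `1` modulo `m + n`; the only option inside the path is that they are consecutive. -/
lemma mem_southRanks_iff_mem_rankSet (hm : 0 < m) (hn : 0 < n) (hco : m.Coprime n)
    (hD : IsDyck m n D) : r ∈ southRanks m n D ↔ r ∈ rankSet m n D ∧ r + m ∈ rankSet m n D := by
  have hlen := hD.1.1
  constructor
  · intro hr
    obtain ⟨i, hi, hN, rfl⟩ := mem_southRanks_iff.1 hr
    have hstep := rank_succ_of_north (m := m) (n := n) (by omega) hN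
    refine ⟨mem_rankSet_iff.2 ⟨i, hi, rfl⟩, mem_rankSet_iff.2 ⟨i + 1, ?_, hstep⟩⟩
    by_contra! hlast
    rw [show i + 1 = m + n by omega, rank_full hD.1] at hstep
    have := hD.2 i hi.le
    omega
  · rintro ⟨hr, hrm⟩
    obtain ⟨i, hi, rfl⟩ := mem_rankSet_iff.1 hr
    obtain ⟨j, hj, hrj⟩ := mem_rankSet_iff.1 hrm
    refine mem_southRanks_iff.2 ⟨i, hi, ?_, rfl⟩
    by_contra hE
    rw [Bool.not_eq_true] at hE
    have hsi := nSteps_add_eSteps hD.1 hi.le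
    have hsj := nSteps_add_eSteps hD.1 hj.le
    obtain ⟨k, hkN, hkE⟩ := Int.exists_eq_mul_of_mul_eq_mul hco hn
      (B := (nSteps D j : ℤ) - nSteps D i - 1) (A := (eSteps D j : ℤ) - eSteps D i)
      (by rw [rank, rank] at hrj; linarith)
    have hji : (j : ℤ) = i + 1 + (m + n) * k := by
      rw [← hsi, ← hsj]; push_cast; linarith
    have hk_lt : k < 1 := by nlinarith
    have hk_gt : -2 < k := by nlinarith
    obtain rfl | rfl : k = 0 ∨ k = -1 := by omega
    · obtain rfl : j = i + 1 := by omega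
      rw [(steps_succ_of_east (by omega) hE).1] at hkN
      omega
    · rw [show j = 0 by omega, rank_zero] at hrj
      have := hD.2 i hi.le
      omega

/-- The south ends of a path lie at pairwise distinct heights `< n`, and the rank of the south
end at height `b` is `m * b` modulo `n`; coprimality makes these residues distinct. -/
lemma eq_of_mem_southRanks_of_dvd_sub (hco : m.Coprime n) (hD : IsDyck m n D)
    {s₁ s₂ : ℤ} (h₁ : s₁ ∈ southRanks m n D) (h₂ : s₂ ∈ southRanks m n D)
    (hdvd : (n : ℤ) ∣ s₁ - s₂) : s₁ = s₂ := by
  obtain ⟨i, hi, hNi, rfl⟩ := mem_southRanks_iff.1 h₁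
  obtain ⟨j, hj, hNj, rfl⟩ := mem_southRanks_iff.1 h₂
  have hli : i < D.length := hD.1.1 ▸ hi
  have hlj : j < D.length := hD.1.1 ▸ hj
  have hbi := nSteps_lt_of_north hD.1 hli hNi
  have hbj := nSteps_lt_of_north hD.1 hlj hNj
  have hcop : IsCoprime (n : ℤ) m := Nat.isCoprime_iff_coprime.2 hco.symm
  have hdvd' : (n : ℤ) ∣ (nSteps D i : ℤ) - nSteps D j := by
    refine hcop.dvd_of_dvd_mul_left ?_
    have : (m : ℤ) * ((nSteps D i : ℤ) - nSteps D j)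
        = rank m n D i - rank m n D j + n * ((eSteps D i : ℤ) - eSteps D j) := by
      simp only [rank]; ring
    rw [this]
    exact dvd_add hdvd (dvd_mul_right _ _)
  have hb : nSteps D i = nSteps D j := by
    have := Int.eq_zero_of_abs_lt_dvd hdvd' (by rw [abs_lt]; omega)
    omega
  have hij : i = j :=
    le_antisymm (le_of_nSteps_eq_of_north hlj hNj hb) (le_of_nSteps_eq_of_north hli hNi hb.symm)
  rw [hij]

lemma exists_north_at_height (hP : IsPath m n D) {b : ℕ} (hb : b < n) :
    ∃ i < m + n, D.getD i false = true ∧ nSteps D i = b := by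
  classical
  set i := Nat.findGreatest (fun i => nSteps D i ≤ b) (m + n)
  have hi : nSteps D i ≤ b := Nat.findGreatest_spec (P := fun i => nSteps D i ≤ b) (zero_le _) (by simp [nSteps])
  have hilt : i < m + n := by
    refine lt_of_le_of_ne (Nat.findGreatest_le _) fun heq => ?_
    rw [heq, nSteps_full hP] at hi
    omega
  have hnext : ¬ nSteps D (i + 1) ≤ b := Nat.findGreatest_is_greatest
    (P := fun i => nSteps D i ≤ b) (Nat.lt_succ_self i) hilt
  have hstep := nSteps_succ_le (P := D) i
  refine ⟨i, hilt, ?_, by omega⟩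
  by_contra hE
  rw [(steps_succ_of_east (hP.1 ▸ hilt) (by simpa using hE)).1] at hnext
  exact hnext hi

lemma exists_mem_southRanks_dvd_sub (hn : 0 < n) (hco : m.Coprime n) (hD : IsDyck m n D)
    (c : ℤ) : ∃ s ∈ southRanks m n D, (n : ℤ) ∣ s - c := by
  obtain ⟨u, v, huv⟩ : IsCoprime (m : ℤ) n := Nat.isCoprime_iff_coprime.2 hco
  have hb0 : 0 ≤ u * c % n := Int.emod_nonneg _ (by positivity)
  have hbn : u * c % n < n := Int.emod_lt_of_pos _ (by positivity)
  obtain ⟨i, hi, hN, hb⟩ := exists_north_at_height hD.1 (b := (u * c % n).toNat) (by omega)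
  refine ⟨rank m n D i, mem_southRanks_iff.2 ⟨i, hi, hN, rfl⟩, ?_⟩
  refine ⟨m * (-(u * c / n)) - eSteps D i - v * c, ?_⟩
  rw [rank, hb, Int.toNat_of_nonneg hb0, Int.emod_def]
  linear_combination c * huv

end SouthRanks

section RankComplement

variable {m n : ℕ} {D D' : List Bool} {M : ℤ}

lemma sub_mem_southRanks_of_isGreatest (hm : 0 < m) (hn : 0 < n) (hD : IsDyck m n D)
    (hM : IsGreatest (↑(rankSet m n D) : Set ℤ) M) : M - m ∈ southRanks m n D := by
  obtain ⟨j, hj, hrj⟩ := mem_rankSet_iff.1 hM.1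
  have hmM : (m : ℤ) ≤ M := hM.2 (mem_rankSet_iff.2 ⟨1, by omega, rank_one hm hn hD⟩)
  obtain ⟨i, rfl⟩ : ∃ i, j = i + 1 := by
    refine Nat.exists_eq_succ_of_ne_zero fun hj0 => ?_
    rw [hj0, rank_zero] at hrj
    omega
  have hi : i < D.length := by rw [hD.1.1]; omega
  cases hstep : D.getD i false
  · have hprev := hM.2 (mem_rankSet_iff.2 ⟨i, by omega, rfl⟩)
    rw [rank_succ_of_east hi hstep] at hrj
    omega
  · refine mem_southRanks_iff.2 ⟨i, by omega, hstep, ?_⟩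
    rw [rank_succ_of_north hi hstep] at hrj
    omega

lemma le_sub_of_mem_southRanks (hm : 0 < m) (hn : 0 < n) (hco : m.Coprime n)
    (hD : IsDyck m n D) (hM : IsGreatest (↑(rankSet m n D) : Set ℤ) M) {s : ℤ}
    (hs : s ∈ southRanks m n D) : s ≤ M - m := by
  have := hM.2 ((mem_southRanks_iff_mem_rankSet hm hn hco hD).1 hs).2
  linarith

lemma mem_rankSet_iff_of_isRankComplement
    (hR' : rankSet m n D' = (rankSet m n D).image (fun r => M - r)) {x : ℤ} :
    x ∈ rankSet m n D' ↔ M - x ∈ rankSet m n D := by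
  rw [hR', Finset.mem_image]
  exact ⟨fun ⟨r, hr, hrx⟩ => by rwa [← hrx, sub_sub_cancel], fun h => ⟨M - x, h, sub_sub_cancel M x⟩⟩

lemma isGreatest_rankSet_of_isRankComplement (hm : 0 < m) (hD : IsDyck m n D)
    (hR' : rankSet m n D' = (rankSet m n D).image (fun r => M - r)) :
    IsGreatest (↑(rankSet m n D') : Set ℤ) M := by
  refine ⟨mem_rankSet_iff_of_isRankComplement hR' |>.2 ?_, fun x hx => ?_⟩
  · rw [sub_self]
    exact mem_rankSet_iff.2 ⟨0, by omega, rank_zero⟩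
  · have := nonneg_of_mem_rankSet hD ((mem_rankSet_iff_of_isRankComplement hR').1 hx)
    linarith

lemma mem_southRanks_iff_of_isRankComplement (hm : 0 < m) (hn : 0 < n) (hco : m.Coprime n)
    (hD : IsDyck m n D) (hD' : IsDyck m n D')
    (hR' : rankSet m n D' = (rankSet m n D).image (fun r => M - r)) {s : ℤ} :
    s ∈ southRanks m n D' ↔ M - m - s ∈ southRanks m n D := by
  rw [mem_southRanks_iff_mem_rankSet hm hn hco hD', mem_rankSet_iff_of_isRankComplement hR',
    mem_rankSet_iff_of_isRankComplement hR', mem_southRanks_iff_mem_rankSet hm hn hco hD,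
    and_comm, show M - (s + m) = M - m - s by ring, show M - m - s + m = M - s by ring]

end RankComplement

/-- The ranks of the lattice points strictly to the right of `D` in the whole half-strip
`0 ≤ y < n`: each south end of rank `s` contributes `s - n, s - 2n, …`. -/
def rightRanks (m n : ℕ) (D : List Bool) : Set ℤ :=
  {c | ∃ s ∈ southRanks m n D, (n : ℤ) ∣ s - c ∧ c < s}

section RightRanks

variable {m n : ℕ} {D D' : List Bool} {M c : ℤ}

lemma mem_andersonSet_iff (hn : 0 < n) (hD : IsDyck m n D) (h : ℕ) :
    h ∈ andersonSet m n D ↔ 0 < h ∧ (h : ℤ) ∈ rightRanks m n D := by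
  constructor
  · rintro ⟨hpos, a, b, ⟨ha, hb, hright⟩, hh⟩
    refine ⟨hpos, ?_⟩
    have hbn : b < n := by
      refine lt_of_le_of_ne hb fun hbn => ?_
      have hlast : eSteps D (m + n) < a :=
        hright (m + n) le_rfl (by rw [hbn]; exact nSteps_full hD.1)
      rw [eSteps_full hD.1] at hlast
      omega
    obtain ⟨i, hi, hN, rfl⟩ := exists_north_at_height hD.1 hbn
    have hlt : eSteps D i < a := hright i hi.le rfl
    refine ⟨rank m n D i, mem_southRanks_iff.2 ⟨i, hi, hN, rfl⟩, ⟨a - eSteps D i, ?_⟩, ?_⟩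
    · rw [rank, hh]; ring
    · have : ((eSteps D i : ℕ) : ℤ) + 1 ≤ a := by exact_mod_cast hlt
      rw [rank, hh]
      nlinarith
  · rintro ⟨hpos, s, hs, ⟨k, hk⟩, hlt⟩
    obtain ⟨i, hi, hN, rfl⟩ := mem_southRanks_iff.1 hs
    have hli : i < D.length := hD.1.1 ▸ hi
    have hb := nSteps_lt_of_north hD.1 hli hN
    have hk : (h : ℤ) = m * nSteps D i - n * (eSteps D i + k) := by rw [rank] at hk; linarith
    have hk1 : 0 < k := by nlinarith
    lift k to ℕ using hk1.le
    refine ⟨hpos, eSteps D i + k, nSteps D i, ⟨?_, hb.le, fun i' _ hi' => ?_⟩, by push_cast; exact hk⟩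
    · have : (n : ℤ) * (eSteps D i + k) < n * m := by
        have : ((nSteps D i : ℕ) : ℤ) + 1 ≤ n := by exact_mod_cast hb
        have : (0 : ℤ) < h := by exact_mod_cast hpos
        nlinarith
      exact_mod_cast (lt_of_mul_lt_mul_left this (by positivity)).le
    · have := eSteps_mono (P := D) (le_of_nSteps_eq_of_north hli hN hi')
      change eSteps D i' < eSteps D i + k
      omega

lemma not_mem_rightRanks_iff (hn : 0 < n) (hco : m.Coprime n) (hD : IsDyck m n D) :
    c ∉ rightRanks m n D ↔ ∃ s ∈ southRanks m n D, (n : ℤ) ∣ s - c ∧ s ≤ c := by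
  constructor
  · intro hc
    obtain ⟨s, hs, hdvd⟩ := exists_mem_southRanks_dvd_sub hn hco hD c
    exact ⟨s, hs, hdvd, not_lt.1 fun hlt => hc ⟨s, hs, hdvd, hlt⟩⟩
  · rintro ⟨s, hs, hdvd, hle⟩ ⟨s', hs', hdvd', hlt⟩
    have := eq_of_mem_southRanks_of_dvd_sub hco hD hs' hs (by simpa using dvd_sub hdvd' hdvd)
    omega

lemma mem_rightRanks_of_neg (hn : 0 < n) (hco : m.Coprime n) (hD : IsDyck m n D) (hc : c < 0) :
    c ∈ rightRanks m n D := by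
  obtain ⟨s, hs, hdvd⟩ := exists_mem_southRanks_dvd_sub hn hco hD c
  obtain ⟨i, hi, -, rfl⟩ := mem_southRanks_iff.1 hs
  exact ⟨_, hs, hdvd, hc.trans_le (hD.2 i hi.le)⟩

lemma zero_not_mem_rightRanks (hm : 0 < m) (hn : 0 < n) (hco : m.Coprime n)
    (hD : IsDyck m n D) : (0 : ℤ) ∉ rightRanks m n D :=
  (not_mem_rightRanks_iff hn hco hD).2 ⟨0, zero_mem_southRanks hm hn hD, by simp, le_rfl⟩

/-- Reflecting `s ↦ M - m - s` swaps the south ends of `D` and `D'`, and turns the points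
below a south end of `D'` into the points on or above the matching south end of `D`. -/
lemma mem_rightRanks_iff_of_isRankComplement (hm : 0 < m) (hn : 0 < n) (hco : m.Coprime n)
    (hD : IsDyck m n D) (hD' : IsDyck m n D')
    (hR' : rankSet m n D' = (rankSet m n D).image (fun r => M - r)) :
    c ∈ rightRanks m n D' ↔ M - m - n - c ∉ rightRanks m n D := by
  rw [not_mem_rightRanks_iff hn hco hD]
  constructor
  · rintro ⟨s', hs', hdvd, hlt⟩
    refine ⟨M - m - s', (mem_southRanks_iff_of_isRankComplement hm hn hco hD hD' hR').1 hs',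
      ?_, ?_⟩
    · rw [show M - m - s' - (M - m - n - c) = n - (s' - c) by ring]
      exact dvd_sub dvd_rfl hdvd
    · linarith [Int.le_of_dvd (sub_pos.2 hlt) hdvd]
  · rintro ⟨s, hs, hdvd, hle⟩
    refine ⟨M - m - s, (mem_southRanks_iff_of_isRankComplement hm hn hco hD hD' hR').2
      (by rwa [sub_sub_cancel]), ?_, by linarith⟩
    rw [show M - m - s - c = n - (s - (M - m - n - c)) by ring]
    exact dvd_sub dvd_rfl hdvd

lemma isGreatest_andersonSet_iff (hm : 0 < m) (hn : 0 < n) (hco : m.Coprime n)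
    (hD : IsDyck m n D) (hM : IsGreatest (↑(rankSet m n D) : Set ℤ) M) (N : ℕ) :
    IsGreatest (andersonSet m n D) N ↔ 0 < N ∧ (N : ℤ) = M - m - n := by
  have hle : ∀ c ∈ rightRanks m n D, c ≤ M - m - n := fun c ⟨s, hs, hdvd, hlt⟩ => by
    linarith [Int.le_of_dvd (sub_pos.2 hlt) hdvd, le_sub_of_mem_southRanks hm hn hco hD hM hs]
  have htop : M - m - n ∈ rightRanks m n D :=
    ⟨M - m, sub_mem_southRanks_of_isGreatest hm hn hD hM, by simp, by linarith⟩
  constructor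
  · rintro ⟨hN, hub⟩
    obtain ⟨hpos, hNr⟩ := (mem_andersonSet_iff hn hD N).1 hN
    have hNle := hle _ hNr
    have hmem : (M - m - n).toNat ∈ andersonSet m n D :=
      (mem_andersonSet_iff hn hD _).2 ⟨by omega, by rwa [Int.toNat_of_nonneg (by omega)]⟩
    have := hub hmem
    omega
  · rintro ⟨hpos, hNeq⟩
    refine ⟨(mem_andersonSet_iff hn hD N).2 ⟨hpos, hNeq ▸ htop⟩, fun h hh => ?_⟩
    have := hle _ ((mem_andersonSet_iff hn hD h).1 hh).2
    change h ≤ N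
    omega

lemma mem_andersonSet_iff_of_isRankComplement (hm : 0 < m) (hn : 0 < n) (hco : m.Coprime n)
    (hD : IsDyck m n D) (hD' : IsDyck m n D') (hM : IsGreatest (↑(rankSet m n D) : Set ℤ) M)
    (hR' : rankSet m n D' = (rankSet m n D).image (fun r => M - r)) {N : ℕ}
    (hN : IsGreatest (andersonSet m n D) N) (h : ℕ) :
    h ∈ andersonSet m n D' ↔ h ≤ N ∧ N - h ∉ andersonSet m n D := by
  obtain ⟨hNpos, hNeq⟩ := (isGreatest_andersonSet_iff hm hn hco hD hM N).1 hN
  have hNr : (N : ℤ) ∈ rightRanks m n D := ((mem_andersonSet_iff hn hD N).1 hN.1).2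
  rw [mem_andersonSet_iff hn hD' h, mem_rightRanks_iff_of_isRankComplement hm hn hco hD hD' hR',
    ← hNeq]
  rcases lt_or_ge N h with hNh | hhN
  · exact iff_of_false (fun hh => hh.2 (mem_rightRanks_of_neg hn hco hD (by omega))) (by omega)
  rw [mem_andersonSet_iff hn hD (N - h), Nat.cast_sub hhN]
  constructor
  · rintro ⟨-, hnot⟩
    exact ⟨hhN, fun hin => hnot hin.2⟩
  · rintro ⟨-, hnot⟩
    refine ⟨Nat.pos_of_ne_zero fun h0 => ?_, fun hin => ?_⟩
    · subst h0
      exact hnot ⟨by simpa using hNpos, by simpa using hNr⟩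
    · rcases hhN.lt_or_eq with hlt | rfl
      · exact hnot ⟨by omega, hin⟩
      · exact zero_not_mem_rightRanks hm hn hco hD (by simpa using hin)

end RightRanks

namespace IsPartition

variable {L K : List ℕ} {i j : ℕ}

lemma getD_le_getD (hL : IsPartition L) (hij : i ≤ j) (hj : j < L.length) :
    L.getD j 0 ≤ L.getD i 0 := by
  rw [List.getD_eq_getElem _ _ hj, List.getD_eq_getElem _ _ (hij.trans_lt hj)]
  rcases hij.lt_or_eq with h | rfl
  · exact List.pairwise_iff_getElem.1 hL.1 i j _ hj h
  · rfl

lemma getD_pos (hL : IsPartition L) (hi : i < L.length) : 0 < L.getD i 0 := by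
  rw [List.getD_eq_getElem _ _ hi]
  exact hL.2 _ (List.getElem_mem hi)

lemma hook_zero (hL : IsPartition L) (hi : i < L.length) :
    hook L i 0 = L.getD i 0 + (L.length - 1 - i) := by
  have hcount : (L.drop (i + 1)).countP (fun x => decide (0 < x)) = L.length - (i + 1) := by
    rw [List.countP_eq_length.2, List.length_drop]
    intro a ha
    simpa using hL.2 a (List.mem_of_mem_drop ha)
  rw [hook, hcount]
  omega

lemma hook_zero_lt_hook_zero (hL : IsPartition L) (hij : i < j) (hj : j < L.length) :
    hook L j 0 < hook L i 0 := by
  rw [hL.hook_zero hj, hL.hook_zero (hij.trans hj)]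
  have := hL.getD_le_getD hij.le hj
  omega

lemma pairwise_hookList (hL : IsPartition L) :
    ((List.range L.length).map (hook L · 0)).Pairwise (· > ·) := by
  rw [List.pairwise_map]
  refine List.pairwise_lt_range.imp_of_mem fun _ hb hab => ?_
  exact hL.hook_zero_lt_hook_zero hab (List.mem_range.1 hb)

lemma card_firstColHooks (hL : IsPartition L) : (firstColHooks L).card = L.length := by
  rw [firstColHooks, Finset.card_image_of_injOn, Finset.card_range]
  intro i hi j hj hij
  simp only [Finset.coe_range, Set.mem_Iio] at hi hj
  by_contra hne
  rcases Nat.lt_or_gt_of_ne hne with h | h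
  · exact (hL.hook_zero_lt_hook_zero h hj).ne hij.symm
  · exact (hL.hook_zero_lt_hook_zero h hi).ne hij

lemma isGreatest_firstColHooks (hL : IsPartition L) (hne : L ≠ []) :
    IsGreatest (↑(firstColHooks L) : Set ℕ) (L.getD 0 0 + L.length - 1) := by
  have hlen : 0 < L.length := List.length_pos_iff.2 hne
  have hpos := hL.getD_pos hlen
  refine ⟨Finset.mem_image.2 ⟨0, Finset.mem_range.2 hlen, by rw [hL.hook_zero hlen]; omega⟩, ?_⟩
  rintro _ hx
  obtain ⟨i, hi, rfl⟩ := Finset.mem_image.1 hx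
  rw [Finset.mem_range] at hi
  rw [hL.hook_zero hi]
  have := hL.getD_le_getD (zero_le i) hi
  omega

lemma eq_of_firstColHooks_eq (hK : IsPartition K) (hL : IsPartition L)
    (h : firstColHooks K = firstColHooks L) : K = L := by
  have hlist := hK.pairwise_hookList.eq_of_mem_iff hL.pairwise_hookList fun a => by
    simpa [firstColHooks] using congrArg (a ∈ ·) h
  have hlen : K.length = L.length := by simpa using congrArg List.length hlist
  refine List.ext_getElem hlen fun i hiK hiL => ?_
  have hhook : hook K i 0 = hook L i 0 := by simpa [hiK, hiL] using congrArg (·[i]?) hlist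
  rw [hK.hook_zero hiK, hL.hook_zero hiL, List.getD_eq_getElem _ _ hiK,
    List.getD_eq_getElem _ _ hiL] at hhook
  omega

end IsPartition

section Conjugate

variable {L : List ℕ} {i j : ℕ}

lemma length_conjugate (L : List ℕ) : (conjugate L).length = L.getD 0 0 := by
  simp [conjugate]

lemma getD_conjugate (hj : j < L.getD 0 0) :
    (conjugate L).getD j 0 = L.countP (fun x => decide (j < x)) := by
  rw [List.getD_eq_getElem _ _ (by rwa [length_conjugate])]
  simp [conjugate]

lemma IsPartition.succ_le_countP (hL : IsPartition L) (hi : i < L.length)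
    (hij : j < L.getD i 0) : i + 1 ≤ L.countP (fun x => decide (j < x)) := by
  have htake : (L.take (i + 1)).countP (fun x => decide (j < x)) = i + 1 := by
    rw [List.countP_eq_length.2, List.length_take]
    · omega
    intro a ha
    obtain ⟨t, ht, rfl⟩ := List.mem_iff_getElem.1 ha
    rw [List.length_take] at ht
    rw [List.getElem_take, ← List.getD_eq_getElem _ 0]
    have := hL.getD_le_getD (show t ≤ i by omega) hi
    simp only [decide_eq_true_eq]
    omega
  rw [← List.take_append_drop (i + 1) L, List.countP_append, htake]
  omega

lemma IsPartition.countP_le (hL : IsPartition L) (hi : i < L.length)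
    (hij : L.getD i 0 ≤ j) : L.countP (fun x => decide (j < x)) ≤ i := by
  have hdrop : (L.drop i).countP (fun x => decide (j < x)) = 0 := by
    rw [List.countP_eq_zero]
    intro a ha
    obtain ⟨t, ht, rfl⟩ := List.mem_iff_getElem.1 ha
    rw [List.length_drop] at ht
    rw [List.getElem_drop, ← List.getD_eq_getElem _ 0]
    have := hL.getD_le_getD (show i ≤ i + t by omega) (by omega)
    simp only [decide_eq_true_eq]
    omega
  have := List.countP_le_length (p := fun x => decide (j < x)) (l := L.take i)
  rw [List.length_take] at this
  rw [← List.take_append_drop i L, List.countP_append, hdrop]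
  omega

lemma isPartition_conjugate (hL : IsPartition L) : IsPartition (conjugate L) := by
  refine ⟨?_, fun x hx => ?_⟩
  · rw [conjugate, List.pairwise_map]
    exact List.pairwise_lt_range.imp fun hab =>
      List.countP_mono_left fun x _ hx => by simp only [decide_eq_true_eq] at hx ⊢; omega
  · obtain ⟨j, hj, rfl⟩ := List.mem_map.1 hx
    rw [List.mem_range] at hj
    have hlen : 0 < L.length := by
      rcases L with _ | _
      · simp at hj
      · simp
    exact hL.succ_le_countP hlen hj

lemma IsPartition.getD_conjugate_zero (hL : IsPartition L) (hne : L ≠ []) :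
    (conjugate L).getD 0 0 = L.length := by
  have hlen : 0 < L.length := List.length_pos_iff.2 hne
  rw [getD_conjugate (hL.getD_pos hlen), List.countP_eq_length.2]
  exact fun a ha => by simpa using hL.2 a ha

/-- `hook L i 0 + hook (conjugate L) j 0 - (λ₁ + ℓ - 1)` is `(λᵢ - j) + (λ'ⱼ - i) - 1`: the hook
length of the cell `(i, j)` when it lies in `λ`, and at most `-1` when it does not. -/
lemma IsPartition.hook_zero_add_hook_zero_conjugate_ne (hL : IsPartition L) (hi : i < L.length)
    (hj : j < L.getD 0 0) :
    hook L i 0 + hook (conjugate L) j 0 ≠ L.getD 0 0 + L.length - 1 := by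
  rw [hL.hook_zero hi, (isPartition_conjugate hL).hook_zero (by rwa [length_conjugate]), length_conjugate,
    getD_conjugate hj]
  have := List.countP_le_length (p := fun x => decide (j < x)) (l := L)
  have := hL.getD_le_getD (zero_le i) hi
  rcases lt_or_ge j (L.getD i 0) with hin | hout
  · have := hL.succ_le_countP hi hin
    omega
  · have := hL.countP_le hi hout
    omega

end Conjugate

/-- By counting, `A` and `N - B` cover `[0, N]`. -/
lemma mem_iff_le_and_sub_not_mem {A B : Finset ℕ} {N : ℕ} (hA : ∀ a ∈ A, a ≤ N)
    (hB : ∀ b ∈ B, b ≤ N) (hAB : ∀ b ∈ B, N - b ∉ A) (hcard : A.card + B.card = N + 1)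
    (x : ℕ) : x ∈ B ↔ x ≤ N ∧ N - x ∉ A := by
  refine ⟨fun hx => ⟨hB x hx, hAB x hx⟩, fun ⟨hxN, hxA⟩ => ?_⟩
  have hinj : Set.InjOn (N - ·) ↑B := fun a ha b hb hab => by
    have := hB a ha; have := hB b hb; simp only at hab; omega
  have hdisj : Disjoint A (B.image (N - ·)) := Finset.disjoint_left.2 fun a haA haB => by
    obtain ⟨b, hb, rfl⟩ := Finset.mem_image.1 haB
    exact hAB b hb haA
  have hunion : A ∪ B.image (N - ·) = Finset.range (N + 1) := by
    refine Finset.eq_of_subset_of_card_le (Finset.union_subset ?_ ?_) ?_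
    · exact fun a ha => Finset.mem_range.2 (Nat.lt_succ_of_le (hA a ha))
    · intro a ha
      obtain ⟨b, -, rfl⟩ := Finset.mem_image.1 ha
      exact Finset.mem_range.2 (by omega)
    · rw [Finset.card_range, Finset.card_union_of_disjoint hdisj,
        Finset.card_image_of_injOn hinj, hcard]
  have hmem : N - x ∈ A ∪ B.image (N - ·) := hunion ▸ Finset.mem_range.2 (by omega)
  obtain ⟨b, hb, hbx⟩ := Finset.mem_image.1 ((Finset.mem_union.1 hmem).resolve_left hxA)
  have := hB b hb
  obtain rfl : b = x := by omega
  exact hb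

lemma IsPartition.mem_firstColHooks_conjugate_iff {L : List ℕ} (hL : IsPartition L) {N : ℕ}
    (hN : IsGreatest (↑(firstColHooks L) : Set ℕ) N) (h : ℕ) :
    h ∈ firstColHooks (conjugate L) ↔ h ≤ N ∧ N - h ∉ firstColHooks L := by
  have hne : L ≠ [] := by rintro rfl; simpa [firstColHooks] using hN.1
  obtain rfl := hN.unique (hL.isGreatest_firstColHooks hne)
  have hne' : conjugate L ≠ [] := by
    rw [← List.length_pos_iff, length_conjugate]
    exact hL.getD_pos (List.length_pos_iff.2 hne)
  have hN' := (isPartition_conjugate hL).isGreatest_firstColHooks hne'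
  rw [hL.getD_conjugate_zero hne, length_conjugate] at hN'
  refine mem_iff_le_and_sub_not_mem (fun a ha => hN.2 ha) (fun b hb => by have := hN'.2 hb; omega)
    (fun b hb hbA => ?_) ?_ h
  · obtain ⟨j, hj, rfl⟩ := Finset.mem_image.1 hb
    obtain ⟨i, hi, hij⟩ := Finset.mem_image.1 hbA
    rw [Finset.mem_range, length_conjugate] at hj
    rw [Finset.mem_range] at hi
    have := hN'.2 hb
    exact hL.hook_zero_add_hook_zero_conjugate_ne hi hj (by omega)
  · rw [hL.card_firstColHooks, (isPartition_conjugate hL).card_firstColHooks, length_conjugate]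
    have := hL.getD_pos (List.length_pos_iff.2 hne)
    omega

/-- If `D'` is the rank complement of the `(m,n)`-Dyck path `D`,
then the `(m,n)`-core corresponding to `D'` under Anderson's bijection is the
conjugate of the one corresponding to `D`. -/
theorem rank_complement_conjugate (m n : ℕ) (hm : 0 < m) (hn : 0 < n)
    (hco : Nat.Coprime m n) (D D' : List Bool)
    (hD : IsDyck m n D) (hD' : IsDyck m n D')
    (hcomp : IsRankComplement m n D D')
    (L L' : List ℕ) (hL : IsPartition L) (hL' : IsPartition L')
    (hα : (↑(firstColHooks L) : Set ℕ) = andersonSet m n D)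
    (hα' : (↑(firstColHooks L') : Set ℕ) = andersonSet m n D') :
    L' = conjugate L := by
  obtain ⟨M, hM, hR'⟩ := hcomp
  have hM' := isGreatest_rankSet_of_isRankComplement hm hD hR'
  apply hL'.eq_of_firstColHooks_eq (isPartition_conjugate hL)
  rcases eq_or_ne L [] with rfl | hne
  · rcases eq_or_ne L' [] with rfl | hne'
    · rfl
    · have hN' := hα' ▸ hL'.isGreatest_firstColHooks hne'
      have hN := (isGreatest_andersonSet_iff hm hn hco hD hM _).2
        ((isGreatest_andersonSet_iff hm hn hco hD' hM' _).1 hN')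
      simpa [← hα, firstColHooks] using hN.1
  · have hN := hL.isGreatest_firstColHooks hne
    ext h
    rw [hL.mem_firstColHooks_conjugate_iff hN]
    exact (Set.ext_iff.1 hα' h).trans
      ((mem_andersonSet_iff_of_isRankComplement hm hn hco hD hD' hM hR' (hα ▸ hN) h).trans
        (and_congr_right' (not_congr (Set.ext_iff.1 hα _).symm)))
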